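/- Under assumption A1 (wᵏ ∈ ℛ_{C,γₖ}^{Dₖ}(xᵏ, zᵏ) with γₖ = (1−ζₖ)/2, zᵏ = xᵏ − αₖDₖ⁻¹∇f(xᵏ)), the iterates x^{k+1} = xᵏ + τₖ(wᵏ − xᵏ) of the inexact SGP method satisfy, for every x ∈ C and every k: ‖x^{k+1} − x‖²_{Dₖ} ≤ ‖xᵏ − x‖²_{Dₖ} + 2αₖτₖ⟨∇f(xᵏ), x − xᵏ⟩ + ξ[f(xᵏ) − f(x^{k+1}) + νₖ], where ξ = 2α_max/σ. -/

import Mathlib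

/-!
Write `d = wᵏ - xᵏ` and `⟨·, ·⟩ = ⟨Dₖ ·, ·⟩`. Since `⟨Dₖ Dₖ⁻¹ ∇f(xᵏ), ·⟩ = ⟨∇f(xᵏ), ·⟩`, testing the
inexact-projection inequality with `y = x` bounds the cross term `2τₖ⟨d, xᵏ - x⟩` in the expansion
of `‖xᵏ + τₖ d - x‖²` by `2τₖ(γₖ - 1)‖d‖²` plus gradient terms, and the quadratic term `τₖ²‖d‖²` is
absorbed because `τₖ ≤ 1 + ζₖ = 2(1 - γₖ)`. Testing it with `y = xᵏ` shows that `d` is a descent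
direction, so the remaining term `-2αₖτₖ⟨∇f(xᵏ), d⟩` may be enlarged to `α_max` and is then
controlled by the line search.
-/

open RealInnerProductSpace

abbrev EucSp (n : ℕ) := EuclideanSpace ℝ (Fin n)

noncomputable def dipr {n : ℕ} (D : Matrix (Fin n) (Fin n) ℝ) (x y : EucSp n) : ℝ :=
  ⟪(Matrix.toEuclideanLin D) x, y⟫

noncomputable def dnorm {n : ℕ} (D : Matrix (Fin n) (Fin n) ℝ) (x : EucSp n) : ℝ :=
  Real.sqrt (dipr D x x)

section InexactProjection

variable {E : Type*} [AddCommGroup E] [Module ℝ E] {B : LinearMap.BilinForm ℝ E}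
  {C : Set E} {γ a t : ℝ} {u w x h : E}

variable (B) in
/-- `IsInexactProj B C γ u v w` is the paper's `w ∈ ℛ_{C,γ}^D(u, v)`, with `⟨D ·, ·⟩` replaced
by an arbitrary bilinear form `B`. -/
def IsInexactProj (C : Set E) (γ : ℝ) (u v w : E) : Prop :=
  w ∈ C ∧ ∀ y ∈ C, B (v - w) (y - w) ≤ γ * B (w - u) (w - u)

theorem IsInexactProj.apply_sub_nonpos (hw : IsInexactProj B C γ u (u - a • h) w) (hu : u ∈ C)
    (hB : B.IsNonneg) (ha : 0 < a) (hγ : γ ≤ 1) : B h (w - u) ≤ 0 := by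
  have hprox := hw.2 u hu
  rw [show u - a • h - w = -(w - u + a • h) by abel, show u - w = -(w - u) by abel] at hprox
  simp only [map_neg, LinearMap.neg_apply, neg_neg, map_add, map_smul, LinearMap.add_apply,
    LinearMap.smul_apply, smul_eq_mul] at hprox
  nlinarith [hB.nonneg (w - u)]

theorem IsInexactProj.sq_dist_le (hw : IsInexactProj B C γ u (u - a • h) w) (hx : x ∈ C)
    (hB : B.IsPosSemidef) (ht₀ : 0 ≤ t) (ht : t ≤ 2 * (1 - γ)) :
    B (u + t • (w - u) - x) (u + t • (w - u) - x) ≤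
      B (u - x) (u - x) + 2 * a * t * (B h (x - u) - B h (w - u)) := by
  have hprox := hw.2 x hx
  rw [show u - a • h - w = -(w - u + a • h) by abel,
    show x - w = -(u - x + (w - u)) by abel] at hprox
  rw [show u + t • (w - u) - x = u - x + t • (w - u) by abel,
    show x - u = -(u - x) by abel]
  simp only [map_neg, LinearMap.neg_apply, map_add, map_smul, LinearMap.add_apply,
    LinearMap.smul_apply, smul_eq_mul] at hprox ⊢
  rw [hB.isSymm.eq (u - x) (w - u)]
  nlinarith [mul_le_mul_of_nonneg_left hprox ht₀,
    mul_nonneg ht₀ (mul_nonneg (sub_nonneg.2 ht) (hB.nonneg (w - u)))]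

end InexactProjection

section ScaledInnerProduct

variable {n : ℕ} {D : Matrix (Fin n) (Fin n) ℝ}

variable (D) in
noncomputable def diprForm : LinearMap.BilinForm ℝ (EucSp n) :=
  (innerₗ (EucSp n)).comp (Matrix.toEuclideanLin D)

@[simp]
theorem diprForm_apply (u v : EucSp n) : diprForm D u v = dipr D u v := rfl

theorem Matrix.PosSemidef.isPosSemidef_diprForm (hD : D.PosSemidef) : (diprForm D).IsPosSemidef := by
  obtain ⟨hsymm, hnonneg⟩ := Matrix.isPositive_toEuclideanLin_iff.2 hD
  exact ⟨⟨fun u v => by simp [dipr, hsymm u v, real_inner_comm]⟩, ⟨hnonneg⟩⟩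

theorem dnorm_sq (hD : D.PosSemidef) (u : EucSp n) : dnorm D u ^ 2 = dipr D u u :=
  Real.sq_sqrt (hD.isPosSemidef_diprForm.nonneg u)

theorem diprForm_toEuclideanLin_inv_apply (hD : IsUnit D) (v u : EucSp n) :
    diprForm D (Matrix.toEuclideanLin D⁻¹ v) u = ⟪v, u⟫ := by
  rw [diprForm_apply, dipr, ← LinearMap.comp_apply, ← Matrix.toLpLin_mul_same,
    Matrix.mul_nonsing_inv _ ((Matrix.isUnit_iff_isUnit_det _).1 hD)]
  simp

end ScaledInnerProduct

theorem stmt14_general {n : ℕ} (C : Set (EucSp n))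
    (f : EucSp n → ℝ) (g : EucSp n → EucSp n)
    (σ ζmin αmin αmax : ℝ) (hσ : 0 < σ ∧ σ < 1)
    (hζmin : 0 < ζmin ∧ ζmin < 1) (hαmin : 0 < αmin)
    (Dm : ℕ → Matrix (Fin n) (Fin n) ℝ) (hpos : ∀ k, (Dm k).PosDef)
    (α ζ τ ν : ℕ → ℝ)
    (hα : ∀ k, αmin ≤ α k ∧ α k ≤ αmax) (hζ : ∀ k, ζmin < ζ k ∧ ζ k ≤ 1)
    (hτ : ∀ k, 0 < τ k ∧ τ k ≤ 1)
    (X w z : ℕ → EucSp n) (hXC : ∀ k, X k ∈ C)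
    (hz : ∀ k, z k = X k - α k • (Matrix.toEuclideanLin (Dm k)⁻¹) (g (X k)))
    (hA1 : ∀ k, w k ∈ C ∧ ∀ y ∈ C,
      dipr (Dm k) (z k - w k) (y - w k) ≤ ((1 - ζ k) / 2) * (dnorm (Dm k) (w k - X k)) ^ 2)
    (hiter : ∀ k, X (k + 1) = X k + τ k • (w k - X k))
    (hls : ∀ k, f (X (k + 1)) ≤ f (X k) + σ * τ k * ⟪g (X k), w k - X k⟫ + ν k) :
    ∀ x ∈ C, ∀ k, (dnorm (Dm k) (X (k + 1) - x)) ^ 2 ≤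
      (dnorm (Dm k) (X k - x)) ^ 2 + 2 * α k * τ k * ⟪g (X k), x - X k⟫ +
        (2 * αmax / σ) * (f (X k) - f (X (k + 1)) + ν k) := by
  intro x hx k
  have hD := (hpos k).posSemidef
  have hα₀ : 0 < α k := hαmin.trans_le (hα k).1
  have hζ₀ : 0 < ζ k := hζmin.1.trans (hζ k).1
  obtain ⟨hτ₀, hτ₁⟩ := hτ k
  have hαmax : 0 ≤ αmax := hα₀.le.trans (hα k).2
  have hσ₀ : 0 < σ := hσ.1
  have hw : IsInexactProj (diprForm (Dm k)) C ((1 - ζ k) / 2) (X k)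
      (X k - α k • Matrix.toEuclideanLin (Dm k)⁻¹ (g (X k))) (w k) := by
    simpa only [IsInexactProj, diprForm_apply, ← hz k, ← dnorm_sq hD] using hA1 k
  have hdesc := hw.apply_sub_nonpos (hXC k) hD.isPosSemidef_diprForm.isNonneg hα₀ (by linarith)
  have hdist := hw.sq_dist_le hx hD.isPosSemidef_diprForm hτ₀.le (by linarith)
  simp only [diprForm_toEuclideanLin_inv_apply (hpos k).isUnit, diprForm_apply] at hdesc hdist
  have hdecrease : -(2 * α k * τ k * ⟪g (X k), w k - X k⟫) ≤
      (2 * αmax / σ) * (f (X k) - f (X (k + 1)) + ν k) := calc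
    _ ≤ 2 * αmax * (τ k * -⟪g (X k), w k - X k⟫) := by
      linarith [mul_le_mul_of_nonneg_right (hα k).2 (mul_nonneg hτ₀.le (neg_nonneg.2 hdesc))]
    _ = (2 * αmax / σ) * -(σ * τ k * ⟪g (X k), w k - X k⟫) := by field_simp
    _ ≤ (2 * αmax / σ) * (f (X k) - f (X (k + 1)) + ν k) := by
      have := hls k
      exact mul_le_mul_of_nonneg_left (by linarith) (by positivity)
  rw [← hiter k] at hdist
  rw [dnorm_sq hD, dnorm_sq hD]
  linarith

theorem stmt14 {n : ℕ} (C : Set (EucSp n)) (hcl : IsClosed C) (hconv : Convex ℝ C)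
    (f : EucSp n → ℝ) (g : EucSp n → EucSp n) (hf : ∀ x, HasGradientAt f (g x) x)
    (μ σ ζmin αmin αmax : ℝ) (hμ : 1 ≤ μ) (hσ : 0 < σ ∧ σ < 1)
    (hζmin : 0 < ζmin ∧ ζmin < 1) (hαmin : 0 < αmin) (hαord : αmin ≤ αmax)
    (Dm : ℕ → Matrix (Fin n) (Fin n) ℝ) (hpos : ∀ k, (Dm k).PosDef)
    (heig : ∀ k i, 1 / μ ≤ (hpos k).1.eigenvalues i ∧ (hpos k).1.eigenvalues i ≤ μ)
    (α ζ τ ν : ℕ → ℝ)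
    (hα : ∀ k, αmin ≤ α k ∧ α k ≤ αmax) (hζ : ∀ k, ζmin < ζ k ∧ ζ k ≤ 1)
    (hτ : ∀ k, 0 < τ k ∧ τ k ≤ 1) (hν : ∀ k, 0 ≤ ν k)
    (X w z : ℕ → EucSp n) (hXC : ∀ k, X k ∈ C)
    (hz : ∀ k, z k = X k - α k • (Matrix.toEuclideanLin (Dm k)⁻¹) (g (X k)))
    (hA1 : ∀ k, w k ∈ C ∧ ∀ y ∈ C,
      dipr (Dm k) (z k - w k) (y - w k) ≤ ((1 - ζ k) / 2) * (dnorm (Dm k) (w k - X k)) ^ 2)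
    (hiter : ∀ k, X (k + 1) = X k + τ k • (w k - X k))
    (hls : ∀ k, f (X (k + 1)) ≤ f (X k) + σ * τ k * ⟪g (X k), w k - X k⟫ + ν k) :
    ∀ x ∈ C, ∀ k, (dnorm (Dm k) (X (k + 1) - x)) ^ 2 ≤
      (dnorm (Dm k) (X k - x)) ^ 2 + 2 * α k * τ k * ⟪g (X k), x - X k⟫ +
        (2 * αmax / σ) * (f (X k) - f (X (k + 1)) + ν k) :=
  stmt14_general C f g σ ζmin αmin αmax hσ hζmin hαmin Dm hpos α ζ τ ν hα hζ hτ X w z hXC hz hA1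
    hiter hls
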